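/- Fix real parameters d_i and d_e, a smooth everywhere-positive function ρ : T³ → ℝ, and smooth vector fields V, B* : T³ → ℝ³. For a triple u = (σ, a, b) of a smooth scalar field σ and smooth vector fields a, b on T³, define J u to be the triple with components: (J u)₁ = −∇·a; (J u)₂ = −∇σ − ρ⁻¹ (∇×V) × a + ρ⁻¹ (∇×b) × B*; (J u)₃ = ∇×(a × ρ⁻¹ B*) − d_i ∇×(ρ⁻¹ (∇×b) × B*) + d_e² ∇×(ρ⁻¹ (∇×b) × (∇×V)). Then J is antisymmetric with respect to the L² pairing: for all such triples u = (σ₁, a₁, b₁) and w = (σ₂, a₂, b₂), ∫_{T³} [ σ₁ (J w)₁ + a₁·(J w)₂ + b₁·(J w)₃ ] dx = − ∫_{T³} [ σ₂ (J u)₁ + a₂·(J u)₂ + b₂·(J u)₃ ] dx. -/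

import Mathlib

open MeasureTheory Real
open scoped ContDiff

noncomputable section

abbrev V3 : Type := Fin 3 → ℝ

def dot (a b : V3) : ℝ := ∑ i, a i * b i

def cross (a b : V3) : V3 :=
  ![a 1 * b 2 - a 2 * b 1, a 2 * b 0 - a 0 * b 2, a 0 * b 1 - a 1 * b 0]

/-- Partial derivative `∂ᵢ f` of a scalar field. -/
def pd (i : Fin 3) (f : V3 → ℝ) (x : V3) : ℝ := fderiv ℝ f x (Pi.single i 1)

/-- Gradient of a scalar field. -/
def grad (f : V3 → ℝ) (x : V3) : V3 := fun i => pd i f x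

/-- Divergence of a vector field. -/
def vdiv (u : V3 → V3) (x : V3) : ℝ := ∑ i, pd i (fun y => u y i) x

/-- Curl of a vector field. -/
def curl (u : V3 → V3) (x : V3) : V3 :=
  ![pd 1 (fun y => u y 2) x - pd 2 (fun y => u y 1) x,
    pd 2 (fun y => u y 0) x - pd 0 (fun y => u y 2) x,
    pd 0 (fun y => u y 1) x - pd 1 (fun y => u y 0) x]

/-- Directional derivative `(a·∇)u` of a vector field `u` along the vector `a`. -/
def dirDeriv (a : V3) (u : V3 → V3) (x : V3) : V3 :=
  fun i => ∑ j, a j * pd j (fun y => u y i) x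

/-- The fundamental cell of the flat torus `T³ = ℝ³/(2πℤ)³`. -/
def T3 : Set V3 := Set.Icc 0 (fun _ => 2 * π)

/-- Periodicity with period `2π` in each coordinate direction. -/
def Periodic3 {α : Type*} (f : V3 → α) : Prop :=
  ∀ (x : V3) (i : Fin 3), f (x + Pi.single i (2 * π)) = f x

/-- First component of the extended MHD Poisson operator: `(J u)₁ = −∇·a`. -/
def J1 (a : V3 → V3) (x : V3) : ℝ := -vdiv a x

/-- Second component: `(J u)₂ = −∇σ − ρ⁻¹(∇×V)×a + ρ⁻¹(∇×b)×B*`. -/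
def J2 (ρ : V3 → ℝ) (Vf Bs : V3 → V3) (σ : V3 → ℝ) (a b : V3 → V3) (x : V3) : V3 :=
  -grad σ x - (ρ x)⁻¹ • cross (curl Vf x) (a x) + (ρ x)⁻¹ • cross (curl b x) (Bs x)

/-- Third component:
`(J u)₃ = ∇×(a × ρ⁻¹B*) − dᵢ ∇×(ρ⁻¹(∇×b)×B*) + dₑ² ∇×(ρ⁻¹(∇×b)×(∇×V))`. -/
def J3 (di de : ℝ) (ρ : V3 → ℝ) (Vf Bs : V3 → V3) (a b : V3 → V3) (x : V3) : V3 :=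
  curl (fun y => cross (a y) ((ρ y)⁻¹ • Bs y)) x
  - di • curl (fun y => (ρ y)⁻¹ • cross (curl b y) (Bs y)) x
  + de ^ 2 • curl (fun y => (ρ y)⁻¹ • cross (curl b y) (curl Vf y)) x


/- ### Auxiliary lemmas -/

lemma one_le_inf' : (1 : WithTop ℕ∞) ≤ ∞ := by norm_num
lemma inf_add_one_le' : (∞ : WithTop ℕ∞) + 1 ≤ ∞ := by norm_num

lemma comp_smooth {u : V3 → V3} (hu : ContDiff ℝ ∞ u) (j : Fin 3) :
    ContDiff ℝ ∞ (fun y => u y j) := contDiff_pi.1 hu j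

lemma dAt {u : V3 → V3} (hu : ContDiff ℝ ∞ u) (j : Fin 3) (x : V3) :
    DifferentiableAt ℝ (fun y => u y j) x :=
  ((comp_smooth hu j).differentiable (by simp)).differentiableAt

lemma dAtS {f : V3 → ℝ} (hf : ContDiff ℝ ∞ f) (x : V3) :
    DifferentiableAt ℝ f x := (hf.differentiable (by simp)).differentiableAt

lemma contDiff_pd {f : V3 → ℝ} (hf : ContDiff ℝ ∞ f) (i : Fin 3) :
    ContDiff ℝ ∞ (pd i f) :=
  (hf.fderiv_right inf_add_one_le').clm_apply contDiff_const

lemma pd_period {f : V3 → ℝ} (hf : ContDiff ℝ ∞ f) (hper : Periodic3 f) (i : Fin 3) :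
    Periodic3 (pd i f) := by
  intro x j
  set v : V3 := Pi.single j (2 * π) with hv
  have h1 : HasFDerivAt (fun y : V3 => y + v) (ContinuousLinearMap.id ℝ V3) x :=
    (hasFDerivAt_id x).add_const _
  have h2 : HasFDerivAt f (fderiv ℝ f (x + v)) (x + v) :=
    (hf.differentiable (by simp) (x + v)).hasFDerivAt
  have h3 : HasFDerivAt (fun y => f (y + v)) ((fderiv ℝ f (x + v)).comp
      (ContinuousLinearMap.id ℝ V3)) x := h2.comp x h1
  have he : (fun y => f (y + v)) = f := funext fun y => hper y j
  rw [he] at h3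
  have hh := h3.fderiv
  simp only [pd, hh]
  rfl

lemma integral_vdiv_eq_zero (f : V3 → V3) (hf : ContDiff ℝ ∞ f) (hper : Periodic3 f) :
    ∫ x in T3, vdiv f x = 0 := by
  have hle : (0 : V3) ≤ (fun _ => 2 * π) := fun i => by positivity
  have hd : Differentiable ℝ f := hf.differentiable (by simp)
  have hpd : ∀ x, vdiv f x = ∑ i, fderiv ℝ f x (Pi.single i 1) i := by
    intro x
    unfold vdiv pd
    refine Finset.sum_congr rfl fun i _ => ?_
    have h1 : HasFDerivAt f (fderiv ℝ f x) x := (hd x).hasFDerivAt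
    have h2 : HasFDerivAt (fun y => f y i)
        ((ContinuousLinearMap.proj (R := ℝ) (φ := fun _ : Fin 3 => ℝ) i).comp (fderiv ℝ f x)) x :=
      (ContinuousLinearMap.proj (R := ℝ) (φ := fun _ : Fin 3 => ℝ) i).hasFDerivAt.comp x h1
    rw [h2.fderiv]
    rfl
  have hcont : Continuous fun x => ∑ i, fderiv ℝ f x (Pi.single i 1) i := by
    refine continuous_finset_sum _ fun i _ => ?_
    exact (continuous_pi_iff.1 (((hf.continuous_fderiv (by simp))).clm_apply continuous_const)) i
  have key := MeasureTheory.integral_divergence_of_hasFDerivAt_off_countable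
      (a := (0 : V3)) (b := fun _ => 2 * π) hle f (fun x => fderiv ℝ f x) ∅ Set.countable_empty
      (hf.continuous.continuousOn)
      (fun x _ => (hd x).hasFDerivAt)
      (hcont.continuousOn.integrableOn_compact isCompact_Icc)
  rw [show (∫ x in T3, vdiv f x) = ∫ x in Set.Icc (0:V3) (fun _ => 2*π),
      ∑ i, fderiv ℝ f x (Pi.single i 1) i from
    integral_congr_ae (Filter.Eventually.of_forall fun x => hpd x), key]
  refine Finset.sum_eq_zero fun i _ => sub_eq_zero.2 ?_
  refine integral_congr_ae (Filter.Eventually.of_forall fun y => ?_)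
  show f (Fin.insertNth (α := fun _ : Fin 3 => ℝ) i (2 * π) y) i
      = f (Fin.insertNth (α := fun _ : Fin 3 => ℝ) i (0 : ℝ) y) i
  have hins : Fin.insertNth (α := fun _ : Fin 3 => ℝ) i (2 * π) y
      = Fin.insertNth (α := fun _ : Fin 3 => ℝ) i (0 : ℝ) y + Pi.single i (2 * π) := by
    funext j
    refine Fin.succAboveCases i ?_ ?_ j
    · simp
    · intro k
      simp [Fin.insertNth_apply_succAbove, Pi.single_eq_of_ne (Fin.succAbove_ne i k)]
  rw [hins, hper _ i]

/- ### pd arithmetic -/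

lemma pd_add {f g : V3 → ℝ} {x : V3} (hf : DifferentiableAt ℝ f x)
    (hg : DifferentiableAt ℝ g x) (i : Fin 3) :
    pd i (fun y => f y + g y) x = pd i f x + pd i g x := by
  unfold pd; rw [fderiv_fun_add hf hg]; rfl

lemma pd_sub {f g : V3 → ℝ} {x : V3} (hf : DifferentiableAt ℝ f x)
    (hg : DifferentiableAt ℝ g x) (i : Fin 3) :
    pd i (fun y => f y - g y) x = pd i f x - pd i g x := by
  unfold pd; rw [fderiv_fun_sub hf hg]; rfl

lemma pd_mul {f g : V3 → ℝ} {x : V3} (hf : DifferentiableAt ℝ f x)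
    (hg : DifferentiableAt ℝ g x) (i : Fin 3) :
    pd i (fun y => f y * g y) x = pd i f x * g x + f x * pd i g x := by
  unfold pd; rw [fderiv_fun_mul hf hg]
  simp only [ContinuousLinearMap.add_apply, ContinuousLinearMap.smul_apply, smul_eq_mul]
  ring

lemma pd_const_mul {f : V3 → ℝ} {x : V3} (hf : DifferentiableAt ℝ f x) (r : ℝ) (i : Fin 3) :
    pd i (fun y => r * f y) x = r * pd i f x := by
  unfold pd; rw [fderiv_const_mul hf]; rfl

/- ### vdiv computation rules -/

lemma vdiv_add {f g h : V3 → V3} (hh : h = fun y => f y + g y) (x : V3)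
    (hf : ContDiff ℝ ∞ f) (hg : ContDiff ℝ ∞ g) :
    vdiv h x = vdiv f x + vdiv g x := by
  subst hh
  unfold vdiv
  rw [← Finset.sum_add_distrib]
  exact Finset.sum_congr rfl fun i _ => pd_add (dAt hf i x) (dAt hg i x) i

lemma vdiv_smul_const {f h : V3 → V3} (r : ℝ) (hh : h = fun y => r • f y) (x : V3)
    (hf : ContDiff ℝ ∞ f) :
    vdiv h x = r * vdiv f x := by
  subst hh
  unfold vdiv
  rw [Finset.mul_sum]
  exact Finset.sum_congr rfl fun i _ => pd_const_mul (dAt hf i x) r i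

lemma vdiv_smul {σ : V3 → ℝ} {u h : V3 → V3} (hh : h = fun y => σ y • u y) (x : V3)
    (hσ : ContDiff ℝ ∞ σ) (hu : ContDiff ℝ ∞ u) :
    vdiv h x = dot (grad σ x) (u x) + σ x * vdiv u x := by
  subst hh
  unfold vdiv
  have e : ∀ i : Fin 3, pd i (fun y => σ y * u y i) x
      = pd i σ x * u x i + σ x * pd i (fun y => u y i) x :=
    fun i => pd_mul (dAtS hσ x) (dAt hu i x) i
  calc (∑ i, pd i (fun y => σ y * u y i) x)
      = ∑ i : Fin 3, (pd i σ x * u x i + σ x * pd i (fun y => u y i) x) :=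
        Finset.sum_congr rfl fun i _ => e i
    _ = dot (grad σ x) (u x) + σ x * vdiv u x := by
        simp [dot, grad, vdiv, Finset.sum_add_distrib, Finset.mul_sum]

lemma vdiv_cross {F G h : V3 → V3} (hh : h = fun y => cross (F y) (G y)) (x : V3)
    (hF : ContDiff ℝ ∞ F) (hG : ContDiff ℝ ∞ G) :
    vdiv h x = dot (curl F x) (G x) - dot (F x) (curl G x) := by
  subst hh
  have key : ∀ (i p q r s : Fin 3),
      pd i (fun y => F y p * G y q - F y r * G y s) x
        = (pd i (fun y => F y p) x * G x q + F x p * pd i (fun y => G y q) x)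
          - (pd i (fun y => F y r) x * G x s + F x r * pd i (fun y => G y s) x) := by
    intro i p q r s
    rw [pd_sub ((dAt hF p x).fun_mul (dAt hG q x)) ((dAt hF r x).fun_mul (dAt hG s x)),
      pd_mul (dAt hF p x) (dAt hG q x), pd_mul (dAt hF r x) (dAt hG s x)]
  unfold vdiv
  rw [Fin.sum_univ_three]
  have e0 : (fun y => cross (F y) (G y) 0) = fun y => F y 1 * G y 2 - F y 2 * G y 1 :=
    funext fun y => by simp [cross]
  have e1 : (fun y => cross (F y) (G y) 1) = fun y => F y 2 * G y 0 - F y 0 * G y 2 :=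
    funext fun y => by simp [cross]
  have e2 : (fun y => cross (F y) (G y) 2) = fun y => F y 0 * G y 1 - F y 1 * G y 0 :=
    funext fun y => by simp [cross]
  rw [e0, e1, e2, key, key, key]
  simp [dot, curl, cross, Fin.sum_univ_three]
  ring

lemma vdiv_add6 {f1 f2 f3 f4 f5 f6 h : V3 → V3}
    (hh : h = fun y => f1 y + f2 y + f3 y + f4 y + f5 y + f6 y) (x : V3)
    (h1 : ContDiff ℝ ∞ f1) (h2 : ContDiff ℝ ∞ f2) (h3 : ContDiff ℝ ∞ f3)
    (h4 : ContDiff ℝ ∞ f4) (h5 : ContDiff ℝ ∞ f5) (h6 : ContDiff ℝ ∞ f6) :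
    vdiv h x = vdiv f1 x + vdiv f2 x + vdiv f3 x + vdiv f4 x + vdiv f5 x + vdiv f6 x := by
  subst hh
  have e5 : vdiv (fun y => f1 y + f2 y + f3 y + f4 y + f5 y + f6 y) x
      = vdiv (fun y => f1 y + f2 y + f3 y + f4 y + f5 y) x + vdiv f6 x :=
    vdiv_add (f := fun y => f1 y + f2 y + f3 y + f4 y + f5 y) (g := f6) rfl x
      ((((h1.add h2).add h3).add h4).add h5) h6
  have e4 : vdiv (fun y => f1 y + f2 y + f3 y + f4 y + f5 y) x
      = vdiv (fun y => f1 y + f2 y + f3 y + f4 y) x + vdiv f5 x :=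
    vdiv_add (f := fun y => f1 y + f2 y + f3 y + f4 y) (g := f5) rfl x
      (((h1.add h2).add h3).add h4) h5
  have e3 : vdiv (fun y => f1 y + f2 y + f3 y + f4 y) x
      = vdiv (fun y => f1 y + f2 y + f3 y) x + vdiv f4 x :=
    vdiv_add (f := fun y => f1 y + f2 y + f3 y) (g := f4) rfl x ((h1.add h2).add h3) h4
  have e2 : vdiv (fun y => f1 y + f2 y + f3 y) x
      = vdiv (fun y => f1 y + f2 y) x + vdiv f3 x :=
    vdiv_add (f := fun y => f1 y + f2 y) (g := f3) rfl x (h1.add h2) h3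
  have e1 : vdiv (fun y => f1 y + f2 y) x = vdiv f1 x + vdiv f2 x :=
    vdiv_add (f := f1) (g := f2) rfl x h1 h2
  rw [e5, e4, e3, e2, e1]

/- ### smoothness and periodicity combinators -/

lemma Periodic3.op2 {α β γ : Type*} {f : V3 → α} {g : V3 → β} (op : α → β → γ)
    (hf : Periodic3 f) (hg : Periodic3 g) : Periodic3 (fun y => op (f y) (g y)) :=
  fun x i => by simp only [hf x i, hg x i]

lemma Periodic3.op1 {α β : Type*} {f : V3 → α} (op : α → β)
    (hf : Periodic3 f) : Periodic3 (fun y => op (f y)) :=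
  fun x i => by simp only [hf x i]

lemma Periodic3.comp3 {u : V3 → V3} (hu : Periodic3 u) (j : Fin 3) :
    Periodic3 (fun y => u y j) := hu.op1 (fun v => v j)

lemma curl_period {u : V3 → V3} (hu : ContDiff ℝ ∞ u) (hup : Periodic3 u) :
    Periodic3 (curl u) := by
  intro x i
  have h : ∀ (a b : Fin 3),
      pd a (fun y => u y b) (x + Pi.single i (2 * π)) = pd a (fun y => u y b) x :=
    fun a b => pd_period (comp_smooth hu b) (hup.comp3 b) a x i
  unfold curl
  rw [h, h, h, h, h, h]

lemma contDiff_vec3 {A B C : V3 → ℝ} (hA : ContDiff ℝ ∞ A) (hB : ContDiff ℝ ∞ B)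
    (hC : ContDiff ℝ ∞ C) : ContDiff ℝ ∞ (fun x => (![A x, B x, C x] : V3)) := by
  refine contDiff_pi.2 fun i => ?_
  fin_cases i
  · simpa using hA
  · simpa using hB
  · simpa using hC

lemma contDiff_curl {u : V3 → V3} (hu : ContDiff ℝ ∞ u) : ContDiff ℝ ∞ (curl u) := by
  unfold curl
  exact contDiff_vec3
    ((contDiff_pd (comp_smooth hu 2) 1).sub (contDiff_pd (comp_smooth hu 1) 2))
    ((contDiff_pd (comp_smooth hu 0) 2).sub (contDiff_pd (comp_smooth hu 2) 0))
    ((contDiff_pd (comp_smooth hu 1) 0).sub (contDiff_pd (comp_smooth hu 0) 1))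

lemma contDiff_cross {u v : V3 → V3} (hu : ContDiff ℝ ∞ u) (hv : ContDiff ℝ ∞ v) :
    ContDiff ℝ ∞ (fun y => cross (u y) (v y)) := by
  unfold cross
  exact contDiff_vec3
    (((comp_smooth hu 1).mul (comp_smooth hv 2)).sub ((comp_smooth hu 2).mul (comp_smooth hv 1)))
    (((comp_smooth hu 2).mul (comp_smooth hv 0)).sub ((comp_smooth hu 0).mul (comp_smooth hv 2)))
    (((comp_smooth hu 0).mul (comp_smooth hv 1)).sub ((comp_smooth hu 1).mul (comp_smooth hv 0)))

lemma contDiff_smulF {σ : V3 → ℝ} {u : V3 → V3} (hσ : ContDiff ℝ ∞ σ) (hu : ContDiff ℝ ∞ u) :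
    ContDiff ℝ ∞ (fun y => σ y • u y) :=
  contDiff_pi.2 fun i => hσ.mul (comp_smooth hu i)

lemma contDiff_grad {σ : V3 → ℝ} (hσ : ContDiff ℝ ∞ σ) : ContDiff ℝ ∞ (grad σ) :=
  contDiff_pi.2 fun i => contDiff_pd hσ i

lemma contDiff_vdiv {u : V3 → V3} (hu : ContDiff ℝ ∞ u) : ContDiff ℝ ∞ (vdiv u) :=
  ContDiff.sum fun i _ => contDiff_pd (comp_smooth hu i) i

lemma cont_dot {P Q : V3 → V3} (hP : Continuous P) (hQ : Continuous Q) :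
    Continuous fun x => dot (P x) (Q x) := by
  unfold dot
  exact continuous_finset_sum _ fun i _ =>
    (continuous_pi_iff.1 hP i).mul (continuous_pi_iff.1 hQ i)

lemma integrableOn_T3 {f : V3 → ℝ} (hf : Continuous f) : IntegrableOn f T3 :=
  hf.continuousOn.integrableOn_compact (isCompact_Icc :
    IsCompact (Set.Icc (0 : V3) (fun _ => 2 * π)))


theorem poisson_operator_antisymmetric
    (di de : ℝ) (ρ : V3 → ℝ) (Vf Bs : V3 → V3)
    (hρ : ContDiff ℝ ∞ ρ) (hρpos : ∀ x, 0 < ρ x) (hρper : Periodic3 ρ)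
    (hV : ContDiff ℝ ∞ Vf) (hVper : Periodic3 Vf)
    (hBs : ContDiff ℝ ∞ Bs) (hBsper : Periodic3 Bs)
    (σ₁ σ₂ : V3 → ℝ) (a₁ b₁ a₂ b₂ : V3 → V3)
    (hσ₁ : ContDiff ℝ ∞ σ₁) (hσ₁per : Periodic3 σ₁)
    (ha₁ : ContDiff ℝ ∞ a₁) (ha₁per : Periodic3 a₁)
    (hb₁ : ContDiff ℝ ∞ b₁) (hb₁per : Periodic3 b₁)
    (hσ₂ : ContDiff ℝ ∞ σ₂) (hσ₂per : Periodic3 σ₂)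
    (ha₂ : ContDiff ℝ ∞ a₂) (ha₂per : Periodic3 a₂)
    (hb₂ : ContDiff ℝ ∞ b₂) (hb₂per : Periodic3 b₂) :
    ∫ x in T3,
        (σ₁ x * J1 a₂ x + dot (a₁ x) (J2 ρ Vf Bs σ₂ a₂ b₂ x)
          + dot (b₁ x) (J3 di de ρ Vf Bs a₂ b₂ x))
      = -∫ x in T3,
          (σ₂ x * J1 a₁ x + dot (a₂ x) (J2 ρ Vf Bs σ₁ a₁ b₁ x)
            + dot (b₂ x) (J3 di de ρ Vf Bs a₁ b₁ x)) := by
  have hρinv : ContDiff ℝ ∞ (fun y => (ρ y)⁻¹) := hρ.inv (fun x => (hρpos x).ne')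
  have hcB : ContDiff ℝ ∞ (fun y => (ρ y)⁻¹ • Bs y) := contDiff_smulF hρinv hBs
  have hcurlV : ContDiff ℝ ∞ (curl Vf) := contDiff_curl hV
  have hcurlb₁ : ContDiff ℝ ∞ (curl b₁) := contDiff_curl hb₁
  have hcurlb₂ : ContDiff ℝ ∞ (curl b₂) := contDiff_curl hb₂
  have hF1 : ContDiff ℝ ∞ (fun y => cross (a₁ y) ((ρ y)⁻¹ • Bs y)) := contDiff_cross ha₁ hcB
  have hF2 : ContDiff ℝ ∞ (fun y => cross (a₂ y) ((ρ y)⁻¹ • Bs y)) := contDiff_cross ha₂ hcB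
  have hW1 : ContDiff ℝ ∞ (fun y => (ρ y)⁻¹ • cross (curl b₁ y) (Bs y)) := contDiff_smulF hρinv (contDiff_cross hcurlb₁ hBs)
  have hW2 : ContDiff ℝ ∞ (fun y => (ρ y)⁻¹ • cross (curl b₂ y) (Bs y)) := contDiff_smulF hρinv (contDiff_cross hcurlb₂ hBs)
  have hU1 : ContDiff ℝ ∞ (fun y => (ρ y)⁻¹ • cross (curl b₁ y) (curl Vf y)) := contDiff_smulF hρinv (contDiff_cross hcurlb₁ hcurlV)
  have hU2 : ContDiff ℝ ∞ (fun y => (ρ y)⁻¹ • cross (curl b₂ y) (curl Vf y)) := contDiff_smulF hρinv (contDiff_cross hcurlb₂ hcurlV)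
  have hT1 : ContDiff ℝ ∞ (fun y => (-1:ℝ) • (σ₁ y • a₂ y)) := contDiff_const.fun_smul (contDiff_smulF hσ₁ ha₂)
  have hT2 : ContDiff ℝ ∞ (fun y => (-1:ℝ) • (σ₂ y • a₁ y)) := contDiff_const.fun_smul (contDiff_smulF hσ₂ ha₁)
  have hT3 : ContDiff ℝ ∞ (fun y => cross (cross (a₁ y) ((ρ y)⁻¹ • Bs y)) (b₂ y)) := contDiff_cross hF1 hb₂
  have hT4 : ContDiff ℝ ∞ (fun y => cross (cross (a₂ y) ((ρ y)⁻¹ • Bs y)) (b₁ y)) := contDiff_cross hF2 hb₁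
  have hT5 : ContDiff ℝ ∞ (fun y => (-di) • (cross ((ρ y)⁻¹ • cross (curl b₂ y) (Bs y)) (b₁ y) + cross ((ρ y)⁻¹ • cross (curl b₁ y) (Bs y)) (b₂ y))) :=
    contDiff_const.fun_smul ((contDiff_cross hW2 hb₁).add (contDiff_cross hW1 hb₂))
  have hT6 : ContDiff ℝ ∞ (fun y => de ^ 2 • (cross ((ρ y)⁻¹ • cross (curl b₂ y) (curl Vf y)) (b₁ y) + cross ((ρ y)⁻¹ • cross (curl b₁ y) (curl Vf y)) (b₂ y))) :=
    contDiff_const.fun_smul ((contDiff_cross hU2 hb₁).add (contDiff_cross hU1 hb₂))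
  have hBIG : ContDiff ℝ ∞ (fun y => (-1:ℝ) • (σ₁ y • a₂ y) + (-1:ℝ) • (σ₂ y • a₁ y) + cross (cross (a₁ y) ((ρ y)⁻¹ • Bs y)) (b₂ y) + cross (cross (a₂ y) ((ρ y)⁻¹ • Bs y)) (b₁ y) + (-di) • (cross ((ρ y)⁻¹ • cross (curl b₂ y) (Bs y)) (b₁ y) + cross ((ρ y)⁻¹ • cross (curl b₁ y) (Bs y)) (b₂ y)) + de ^ 2 • (cross ((ρ y)⁻¹ • cross (curl b₂ y) (curl Vf y)) (b₁ y) + cross ((ρ y)⁻¹ • cross (curl b₁ y) (curl Vf y)) (b₂ y))) :=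
    ((((hT1.add hT2).add hT3).add hT4).add hT5).add hT6
  -- periodicity
  have pρinv : Periodic3 (fun y => (ρ y)⁻¹) := hρper.op1 Inv.inv
  have pcB : Periodic3 (fun y => (ρ y)⁻¹ • Bs y) := Periodic3.op2 (· • ·) pρinv hBsper
  have pcurlV : Periodic3 (curl Vf) := curl_period hV hVper
  have pcurlb₁ : Periodic3 (curl b₁) := curl_period hb₁ hb₁per
  have pcurlb₂ : Periodic3 (curl b₂) := curl_period hb₂ hb₂per
  have pW1 : Periodic3 (fun y => (ρ y)⁻¹ • cross (curl b₁ y) (Bs y)) :=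
    Periodic3.op2 (· • ·) pρinv (Periodic3.op2 cross pcurlb₁ hBsper)
  have pW2 : Periodic3 (fun y => (ρ y)⁻¹ • cross (curl b₂ y) (Bs y)) :=
    Periodic3.op2 (· • ·) pρinv (Periodic3.op2 cross pcurlb₂ hBsper)
  have pU1 : Periodic3 (fun y => (ρ y)⁻¹ • cross (curl b₁ y) (curl Vf y)) :=
    Periodic3.op2 (· • ·) pρinv (Periodic3.op2 cross pcurlb₁ pcurlV)
  have pU2 : Periodic3 (fun y => (ρ y)⁻¹ • cross (curl b₂ y) (curl Vf y)) :=
    Periodic3.op2 (· • ·) pρinv (Periodic3.op2 cross pcurlb₂ pcurlV)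
  have pT1 : Periodic3 (fun y => (-1:ℝ) • (σ₁ y • a₂ y)) :=
    (Periodic3.op2 (· • ·) hσ₁per ha₂per).op1 (fun v => (-1:ℝ) • v)
  have pT2 : Periodic3 (fun y => (-1:ℝ) • (σ₂ y • a₁ y)) :=
    (Periodic3.op2 (· • ·) hσ₂per ha₁per).op1 (fun v => (-1:ℝ) • v)
  have pT3 : Periodic3 (fun y => cross (cross (a₁ y) ((ρ y)⁻¹ • Bs y)) (b₂ y)) :=
    Periodic3.op2 cross (Periodic3.op2 cross ha₁per pcB) hb₂per
  have pT4 : Periodic3 (fun y => cross (cross (a₂ y) ((ρ y)⁻¹ • Bs y)) (b₁ y)) :=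
    Periodic3.op2 cross (Periodic3.op2 cross ha₂per pcB) hb₁per
  have pT5 : Periodic3 (fun y => (-di) • (cross ((ρ y)⁻¹ • cross (curl b₂ y) (Bs y)) (b₁ y) + cross ((ρ y)⁻¹ • cross (curl b₁ y) (Bs y)) (b₂ y))) :=
    (Periodic3.op2 (· + ·) (Periodic3.op2 cross pW2 hb₁per)
      (Periodic3.op2 cross pW1 hb₂per)).op1 (fun v => (-di) • v)
  have pT6 : Periodic3 (fun y => de ^ 2 • (cross ((ρ y)⁻¹ • cross (curl b₂ y) (curl Vf y)) (b₁ y) + cross ((ρ y)⁻¹ • cross (curl b₁ y) (curl Vf y)) (b₂ y))) :=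
    (Periodic3.op2 (· + ·) (Periodic3.op2 cross pU2 hb₁per)
      (Periodic3.op2 cross pU1 hb₂per)).op1 (fun v => de ^ 2 • v)
  have pBIG : Periodic3 (fun y => (-1:ℝ) • (σ₁ y • a₂ y) + (-1:ℝ) • (σ₂ y • a₁ y) + cross (cross (a₁ y) ((ρ y)⁻¹ • Bs y)) (b₂ y) + cross (cross (a₂ y) ((ρ y)⁻¹ • Bs y)) (b₁ y) + (-di) • (cross ((ρ y)⁻¹ • cross (curl b₂ y) (Bs y)) (b₁ y) + cross ((ρ y)⁻¹ • cross (curl b₁ y) (Bs y)) (b₂ y)) + de ^ 2 • (cross ((ρ y)⁻¹ • cross (curl b₂ y) (curl Vf y)) (b₁ y) + cross ((ρ y)⁻¹ • cross (curl b₁ y) (curl Vf y)) (b₂ y))) :=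
    Periodic3.op2 (· + ·) (Periodic3.op2 (· + ·) (Periodic3.op2 (· + ·)
      (Periodic3.op2 (· + ·) (Periodic3.op2 (· + ·) pT1 pT2) pT3) pT4) pT5) pT6
  -- continuity of the two integrands
  have contJ1₂ : Continuous (fun x => J1 a₂ x) := ((contDiff_vdiv ha₂).continuous).neg
  have contJ1₁ : Continuous (fun x => J1 a₁ x) := ((contDiff_vdiv ha₁).continuous).neg
  have contJ2₂ : Continuous (fun x => J2 ρ Vf Bs σ₂ a₂ b₂ x) :=
    (((contDiff_grad hσ₂).continuous.neg).sub
      (hρinv.continuous.smul (contDiff_cross hcurlV ha₂).continuous)).add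
      (hρinv.continuous.smul (contDiff_cross hcurlb₂ hBs).continuous)
  have contJ2₁ : Continuous (fun x => J2 ρ Vf Bs σ₁ a₁ b₁ x) :=
    (((contDiff_grad hσ₁).continuous.neg).sub
      (hρinv.continuous.smul (contDiff_cross hcurlV ha₁).continuous)).add
      (hρinv.continuous.smul (contDiff_cross hcurlb₁ hBs).continuous)
  have contJ3₂ : Continuous (fun x => J3 di de ρ Vf Bs a₂ b₂ x) :=
    (((contDiff_curl hF2).continuous).sub
      (((contDiff_curl hW2).continuous).const_smul di)).add
      (((contDiff_curl hU2).continuous).const_smul (de ^ 2))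
  have contJ3₁ : Continuous (fun x => J3 di de ρ Vf Bs a₁ b₁ x) :=
    (((contDiff_curl hF1).continuous).sub
      (((contDiff_curl hW1).continuous).const_smul di)).add
      (((contDiff_curl hU1).continuous).const_smul (de ^ 2))
  have hInt1 : IntegrableOn (fun x => σ₁ x * J1 a₂ x + dot (a₁ x) (J2 ρ Vf Bs σ₂ a₂ b₂ x)
      + dot (b₁ x) (J3 di de ρ Vf Bs a₂ b₂ x)) T3 :=
    integrableOn_T3 (((hσ₁.continuous.mul contJ1₂).add
      (cont_dot ha₁.continuous contJ2₂)).add (cont_dot hb₁.continuous contJ3₂))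
  have hInt2 : IntegrableOn (fun x => σ₂ x * J1 a₁ x + dot (a₂ x) (J2 ρ Vf Bs σ₁ a₁ b₁ x)
      + dot (b₂ x) (J3 di de ρ Vf Bs a₁ b₁ x)) T3 :=
    integrableOn_T3 (((hσ₂.continuous.mul contJ1₁).add
      (cont_dot ha₂.continuous contJ2₁)).add (cont_dot hb₂.continuous contJ3₁))
  -- the pointwise identity
  have hpt : ∀ x, (σ₁ x * J1 a₂ x + dot (a₁ x) (J2 ρ Vf Bs σ₂ a₂ b₂ x)
        + dot (b₁ x) (J3 di de ρ Vf Bs a₂ b₂ x))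
      + (σ₂ x * J1 a₁ x + dot (a₂ x) (J2 ρ Vf Bs σ₁ a₁ b₁ x)
        + dot (b₂ x) (J3 di de ρ Vf Bs a₁ b₁ x))
      = vdiv (fun y => (-1:ℝ) • (σ₁ y • a₂ y) + (-1:ℝ) • (σ₂ y • a₁ y) + cross (cross (a₁ y) ((ρ y)⁻¹ • Bs y)) (b₂ y) + cross (cross (a₂ y) ((ρ y)⁻¹ • Bs y)) (b₁ y) + (-di) • (cross ((ρ y)⁻¹ • cross (curl b₂ y) (Bs y)) (b₁ y) + cross ((ρ y)⁻¹ • cross (curl b₁ y) (Bs y)) (b₂ y)) + de ^ 2 • (cross ((ρ y)⁻¹ • cross (curl b₂ y) (curl Vf y)) (b₁ y) + cross ((ρ y)⁻¹ • cross (curl b₁ y) (curl Vf y)) (b₂ y))) x := by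
    intro x
    rw [vdiv_add6 (h := fun y => (-1:ℝ) • (σ₁ y • a₂ y) + (-1:ℝ) • (σ₂ y • a₁ y) + cross (cross (a₁ y) ((ρ y)⁻¹ • Bs y)) (b₂ y) + cross (cross (a₂ y) ((ρ y)⁻¹ • Bs y)) (b₁ y) + (-di) • (cross ((ρ y)⁻¹ • cross (curl b₂ y) (Bs y)) (b₁ y) + cross ((ρ y)⁻¹ • cross (curl b₁ y) (Bs y)) (b₂ y)) + de ^ 2 • (cross ((ρ y)⁻¹ • cross (curl b₂ y) (curl Vf y)) (b₁ y) + cross ((ρ y)⁻¹ • cross (curl b₁ y) (curl Vf y)) (b₂ y)))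
        (f1 := fun y => (-1:ℝ) • (σ₁ y • a₂ y)) (f2 := fun y => (-1:ℝ) • (σ₂ y • a₁ y)) (f3 := fun y => cross (cross (a₁ y) ((ρ y)⁻¹ • Bs y)) (b₂ y)) (f4 := fun y => cross (cross (a₂ y) ((ρ y)⁻¹ • Bs y)) (b₁ y)) (f5 := fun y => (-di) • (cross ((ρ y)⁻¹ • cross (curl b₂ y) (Bs y)) (b₁ y) + cross ((ρ y)⁻¹ • cross (curl b₁ y) (Bs y)) (b₂ y)))
        (f6 := fun y => de ^ 2 • (cross ((ρ y)⁻¹ • cross (curl b₂ y) (curl Vf y)) (b₁ y) + cross ((ρ y)⁻¹ • cross (curl b₁ y) (curl Vf y)) (b₂ y))) rfl x hT1 hT2 hT3 hT4 hT5 hT6,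
      vdiv_smul_const (h := fun y => (-1:ℝ) • (σ₁ y • a₂ y)) (f := fun y => σ₁ y • a₂ y) (-1) rfl x
        (contDiff_smulF hσ₁ ha₂),
      vdiv_smul (h := fun y => σ₁ y • a₂ y) (σ := σ₁) (u := a₂) rfl x hσ₁ ha₂,
      vdiv_smul_const (h := fun y => (-1:ℝ) • (σ₂ y • a₁ y)) (f := fun y => σ₂ y • a₁ y) (-1) rfl x
        (contDiff_smulF hσ₂ ha₁),
      vdiv_smul (h := fun y => σ₂ y • a₁ y) (σ := σ₂) (u := a₁) rfl x hσ₂ ha₁,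
      vdiv_cross (h := fun y => cross (cross (a₁ y) ((ρ y)⁻¹ • Bs y)) (b₂ y)) (F := fun y => cross (a₁ y) ((ρ y)⁻¹ • Bs y)) (G := b₂) rfl x hF1 hb₂,
      vdiv_cross (h := fun y => cross (cross (a₂ y) ((ρ y)⁻¹ • Bs y)) (b₁ y)) (F := fun y => cross (a₂ y) ((ρ y)⁻¹ • Bs y)) (G := b₁) rfl x hF2 hb₁,
      vdiv_smul_const (h := fun y => (-di) • (cross ((ρ y)⁻¹ • cross (curl b₂ y) (Bs y)) (b₁ y) + cross ((ρ y)⁻¹ • cross (curl b₁ y) (Bs y)) (b₂ y)))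
        (f := fun y => cross ((ρ y)⁻¹ • cross (curl b₂ y) (Bs y)) (b₁ y) + cross ((ρ y)⁻¹ • cross (curl b₁ y) (Bs y)) (b₂ y)) (-di) rfl x
        ((contDiff_cross hW2 hb₁).add (contDiff_cross hW1 hb₂)),
      vdiv_add (h := fun y => cross ((ρ y)⁻¹ • cross (curl b₂ y) (Bs y)) (b₁ y) + cross ((ρ y)⁻¹ • cross (curl b₁ y) (Bs y)) (b₂ y))
        (f := fun y => cross ((ρ y)⁻¹ • cross (curl b₂ y) (Bs y)) (b₁ y)) (g := fun y => cross ((ρ y)⁻¹ • cross (curl b₁ y) (Bs y)) (b₂ y)) rfl x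
        (contDiff_cross hW2 hb₁) (contDiff_cross hW1 hb₂),
      vdiv_cross (h := fun y => cross ((ρ y)⁻¹ • cross (curl b₂ y) (Bs y)) (b₁ y)) (F := fun y => (ρ y)⁻¹ • cross (curl b₂ y) (Bs y)) (G := b₁) rfl x hW2 hb₁,
      vdiv_cross (h := fun y => cross ((ρ y)⁻¹ • cross (curl b₁ y) (Bs y)) (b₂ y)) (F := fun y => (ρ y)⁻¹ • cross (curl b₁ y) (Bs y)) (G := b₂) rfl x hW1 hb₂,
      vdiv_smul_const (h := fun y => de ^ 2 • (cross ((ρ y)⁻¹ • cross (curl b₂ y) (curl Vf y)) (b₁ y) + cross ((ρ y)⁻¹ • cross (curl b₁ y) (curl Vf y)) (b₂ y)))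
        (f := fun y => cross ((ρ y)⁻¹ • cross (curl b₂ y) (curl Vf y)) (b₁ y) + cross ((ρ y)⁻¹ • cross (curl b₁ y) (curl Vf y)) (b₂ y)) (de ^ 2) rfl x
        ((contDiff_cross hU2 hb₁).add (contDiff_cross hU1 hb₂)),
      vdiv_add (h := fun y => cross ((ρ y)⁻¹ • cross (curl b₂ y) (curl Vf y)) (b₁ y) + cross ((ρ y)⁻¹ • cross (curl b₁ y) (curl Vf y)) (b₂ y))
        (f := fun y => cross ((ρ y)⁻¹ • cross (curl b₂ y) (curl Vf y)) (b₁ y)) (g := fun y => cross ((ρ y)⁻¹ • cross (curl b₁ y) (curl Vf y)) (b₂ y)) rfl x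
        (contDiff_cross hU2 hb₁) (contDiff_cross hU1 hb₂),
      vdiv_cross (h := fun y => cross ((ρ y)⁻¹ • cross (curl b₂ y) (curl Vf y)) (b₁ y)) (F := fun y => (ρ y)⁻¹ • cross (curl b₂ y) (curl Vf y)) (G := b₁) rfl x hU2 hb₁,
      vdiv_cross (h := fun y => cross ((ρ y)⁻¹ • cross (curl b₁ y) (curl Vf y)) (b₂ y)) (F := fun y => (ρ y)⁻¹ • cross (curl b₁ y) (curl Vf y)) (G := b₂) rfl x hU1 hb₂]
    simp only [J1, J2, J3, dot, cross, grad, Fin.sum_univ_three, Pi.add_apply, Pi.sub_apply,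
      Pi.neg_apply, Pi.smul_apply, smul_eq_mul, Matrix.cons_val_zero, Matrix.cons_val_one,
      Matrix.head_cons, Matrix.cons_val_two, Matrix.tail_cons]
    ring
  have key : (∫ x in T3, (σ₁ x * J1 a₂ x + dot (a₁ x) (J2 ρ Vf Bs σ₂ a₂ b₂ x)
        + dot (b₁ x) (J3 di de ρ Vf Bs a₂ b₂ x)))
      + (∫ x in T3, (σ₂ x * J1 a₁ x + dot (a₂ x) (J2 ρ Vf Bs σ₁ a₁ b₁ x)
        + dot (b₂ x) (J3 di de ρ Vf Bs a₁ b₁ x))) = 0 := by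
    rw [← MeasureTheory.integral_add hInt1 hInt2]
    calc (∫ x in T3, ((σ₁ x * J1 a₂ x + dot (a₁ x) (J2 ρ Vf Bs σ₂ a₂ b₂ x)
            + dot (b₁ x) (J3 di de ρ Vf Bs a₂ b₂ x))
          + (σ₂ x * J1 a₁ x + dot (a₂ x) (J2 ρ Vf Bs σ₁ a₁ b₁ x)
            + dot (b₂ x) (J3 di de ρ Vf Bs a₁ b₁ x))))
        = ∫ x in T3, vdiv (fun y => (-1:ℝ) • (σ₁ y • a₂ y) + (-1:ℝ) • (σ₂ y • a₁ y) + cross (cross (a₁ y) ((ρ y)⁻¹ • Bs y)) (b₂ y) + cross (cross (a₂ y) ((ρ y)⁻¹ • Bs y)) (b₁ y) + (-di) • (cross ((ρ y)⁻¹ • cross (curl b₂ y) (Bs y)) (b₁ y) + cross ((ρ y)⁻¹ • cross (curl b₁ y) (Bs y)) (b₂ y)) + de ^ 2 • (cross ((ρ y)⁻¹ • cross (curl b₂ y) (curl Vf y)) (b₁ y) + cross ((ρ y)⁻¹ • cross (curl b₁ y) (curl Vf y)) (b₂ y))) x :=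
          integral_congr_ae (Filter.Eventually.of_forall fun x => hpt x)
      _ = 0 := integral_vdiv_eq_zero _ hBIG pBIG
  linarith [key]

end
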